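/- Solvability of the recursion at the resonant level q+1 = 2: with G₋₂ = (2,−1,−1), G₋₁ = (−2(z₁+z₂), 2z₂, 2z₁), G₀ = (−z₁²+4z₁z₂−z₂², z₁(z₁−2z₂), z₂(z₂−2z₁)), G₁ = (0, 2(z₁−z₂)³, −2(z₁−z₂)³), the right-hand side of the recursion satisfies 2·(T₀·G₁ + T₁·G₀ + T₂·G₋₁ + T₃·G₋₂) = 2(z₁−z₂)⁴·(2, −1, −1); in particular this vector lies in the range of the (non-invertible) matrix (2·I₃ − 2T). -/
import Mathlib


open Matrix

noncomputable def P1 : Matrix (Fin 3) (Fin 3) ℂ := !![0,1,0; 1,0,0; 0,0,1]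
noncomputable def P2 : Matrix (Fin 3) (Fin 3) ℂ := !![0,0,1; 0,1,0; 1,0,0]
noncomputable def T : Matrix (Fin 3) (Fin 3) ℂ := P1 + P2

/-- T_r = z₁^{r+1}·P₁ + z₂^{r+1}·P₂. -/
noncomputable def Tr (z₁ z₂ : ℂ) (r : ℕ) : Matrix (Fin 3) (Fin 3) ℂ :=
  z₁^(r+1) • P1 + z₂^(r+1) • P2

noncomputable def Gm2 : Fin 3 → ℂ := ![2, -1, -1]
noncomputable def Gm1 (z₁ z₂ : ℂ) : Fin 3 → ℂ := ![-2*(z₁ + z₂), 2*z₂, 2*z₁]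
noncomputable def G0 (z₁ z₂ : ℂ) : Fin 3 → ℂ :=
  ![-z₁^2 + 4*z₁*z₂ - z₂^2, z₁*(z₁ - 2*z₂), z₂*(z₂ - 2*z₁)]
noncomputable def G1 (z₁ z₂ : ℂ) : Fin 3 → ℂ :=
  ![0, 2*(z₁ - z₂)^3, -2*(z₁ - z₂)^3]

theorem resonant_level_two (z₁ z₂ : ℂ) (hz : z₁ ≠ z₂) :
    (2 : ℂ) • (Tr z₁ z₂ 0 *ᵥ G1 z₁ z₂ + Tr z₁ z₂ 1 *ᵥ G0 z₁ z₂ +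
        Tr z₁ z₂ 2 *ᵥ Gm1 z₁ z₂ + Tr z₁ z₂ 3 *ᵥ Gm2) =
      (2 * (z₁ - z₂)^4) • ![2, -1, -1] ∧
    ∃ x : Fin 3 → ℂ,
      ((2 : ℂ) • (1 : Matrix (Fin 3) (Fin 3) ℂ) - (2 : ℂ) • T) *ᵥ x =
        (2 : ℂ) • (Tr z₁ z₂ 0 *ᵥ G1 z₁ z₂ + Tr z₁ z₂ 1 *ᵥ G0 z₁ z₂ +
          Tr z₁ z₂ 2 *ᵥ Gm1 z₁ z₂ + Tr z₁ z₂ 3 *ᵥ Gm2) := by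
  have key : (2 : ℂ) • (Tr z₁ z₂ 0 *ᵥ G1 z₁ z₂ + Tr z₁ z₂ 1 *ᵥ G0 z₁ z₂ +
        Tr z₁ z₂ 2 *ᵥ Gm1 z₁ z₂ + Tr z₁ z₂ 3 *ᵥ Gm2) =
      (2 * (z₁ - z₂)^4) • ![2, -1, -1] := by
    funext i
    fin_cases i <;>
      simp [Tr, P1, P2, G1, G0, Gm1, Gm2, mulVec, dotProduct, Fin.sum_univ_succ] <;>
      ring
  refine ⟨key, ![(z₁ - z₂)^4, -(z₁ - z₂)^4, 0], ?_⟩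
  rw [key]
  funext i
  fin_cases i <;>
    simp [T, P1, P2, mulVec, dotProduct, Fin.sum_univ_succ, Matrix.one_apply] <;>
    ring
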